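/- arXiv:1512.01736 — 10 statements merged into one kernel-verified Lean document; each statement's English description precedes it below -/
import Mathlib

section
/- Let κ > 0 and let x, y, a, b, d, f be real numbers arising as distances in a spherical configuration where M₁ is the midpoint of a geodesic segment of length x from A to P and M₂ is the midpoint of a geodesic segment of length y from B to Q, with a = AB, b = PQ, d = PB, f = AQ, b' = M₁M₂, d' = M₁B, f' = AM₂, g = PM₂. Given the Bruhat–Tits relations cos(κd') = (cos(κa)+cos(κd))/(2cos(κx/2)), cos(κf') = (cos(κa)+cos(κf))/(2cos(κy/2)), cos(κg) = (cos(κb)+cos(κd))/(2cos(κy/2)), cos(κb') = (cos(κg)+cos(κf'))/(2cos(κx/2)), it follows that [cos(κb') + cos(κx/2)cos(κy/2) − (cos(κx/2)+cos(κd'))(cos(κy/2)+cos(κf'))/(1+cos(κa))] / (sin(κx/2)sin(κy/2)) equals [cos(κb) + cos(κx)cos(κy) − (cos(κx)+cos(κd))(cos(κy)+cos(κf))/(1+cos(κa))] / (sin(κx)sin(κy)). -/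
open Real

/-- The `K`-quadrilateral cosine is unchanged when the bound vectors are cut in half:
algebraic core. Given the four Bruhat–Tits relations for the midpoint distances
`b' = M₁M₂`, `d' = M₁B`, `f' = AM₂`, `g = PM₂`, the halved `cosq_K` expression equals
the original one. -/
theorem cosq_halving (κ x y a b d f b' d' f' g : ℝ) (hκ : 0 < κ)
    (hsx2 : Real.sin (κ * x / 2) ≠ 0) (hsy2 : Real.sin (κ * y / 2) ≠ 0)
    (hsx : Real.sin (κ * x) ≠ 0) (hsy : Real.sin (κ * y) ≠ 0)
    (hca : 1 + Real.cos (κ * a) ≠ 0)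
    (hcx2 : Real.cos (κ * x / 2) ≠ 0) (hcy2 : Real.cos (κ * y / 2) ≠ 0)
    (hd' : Real.cos (κ * d') = (Real.cos (κ * a) + Real.cos (κ * d)) / (2 * Real.cos (κ * x / 2)))
    (hf' : Real.cos (κ * f') = (Real.cos (κ * a) + Real.cos (κ * f)) / (2 * Real.cos (κ * y / 2)))
    (hg : Real.cos (κ * g) = (Real.cos (κ * b) + Real.cos (κ * d)) / (2 * Real.cos (κ * y / 2)))
    (hb' : Real.cos (κ * b') = (Real.cos (κ * g) + Real.cos (κ * f')) / (2 * Real.cos (κ * x / 2))) :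
    (Real.cos (κ * b') + Real.cos (κ * x / 2) * Real.cos (κ * y / 2)
        - (Real.cos (κ * x / 2) + Real.cos (κ * d')) * (Real.cos (κ * y / 2) + Real.cos (κ * f'))
            / (1 + Real.cos (κ * a)))
      / (Real.sin (κ * x / 2) * Real.sin (κ * y / 2))
    = (Real.cos (κ * b) + Real.cos (κ * x) * Real.cos (κ * y)
        - (Real.cos (κ * x) + Real.cos (κ * d)) * (Real.cos (κ * y) + Real.cos (κ * f))
            / (1 + Real.cos (κ * a)))
      / (Real.sin (κ * x) * Real.sin (κ * y)) := by
  have ex : κ * x = 2 * (κ * x / 2) := by ring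
  have ey : κ * y = 2 * (κ * y / 2) := by ring
  rw [hb', hd', hf', hg, ex, ey, Real.sin_two_mul, Real.sin_two_mul,
    Real.cos_two_mul, Real.cos_two_mul]
  field_simp
  ring
end

section
/- For every ε ∈ (0, π/4), one has [cos(π/2+ε) + cos(π/2+2ε)·cos ε]/[sin(π/2+2ε)·sin ε] − 2·cos(π/2+2ε)·[cos ε + cos(π/2+ε)] / ([1+cos(π/2+2ε)]·sin(π/2+2ε)·sin ε) = (1 + sin 2ε)/(1 − sin 2ε), and this quantity is strictly greater than 1. -/
open Real

/-- In the T-shaped graph example, `cosq₁(BQ→, AP→) = (1 + sin 2ε)/(1 − sin 2ε) > 1`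
for every `ε ∈ (0, π/4)`. -/
theorem cosq_T_graph_gt_one (ε : ℝ) (hε : 0 < ε) (hε' : ε < π / 4) :
    (Real.cos (π / 2 + ε) + Real.cos (π / 2 + 2 * ε) * Real.cos ε)
        / (Real.sin (π / 2 + 2 * ε) * Real.sin ε)
      - 2 * Real.cos (π / 2 + 2 * ε) * (Real.cos ε + Real.cos (π / 2 + ε))
        / ((1 + Real.cos (π / 2 + 2 * ε)) * Real.sin (π / 2 + 2 * ε) * Real.sin ε)
      = (1 + Real.sin (2 * ε)) / (1 - Real.sin (2 * ε)) ∧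
    1 < (1 + Real.sin (2 * ε)) / (1 - Real.sin (2 * ε)) := by
  have hs : 0 < Real.sin ε := Real.sin_pos_of_pos_of_lt_pi hε (by linarith [Real.pi_gt_three])
  have hc : Real.cos ε > 0 := Real.cos_pos_of_mem_Ioo ⟨by linarith [Real.pi_pos], by linarith [Real.pi_pos]⟩
  have hcs : Real.sin ε < Real.cos ε := by
    have := Real.cos_lt_cos_of_nonneg_of_le_pi (by positivity) (by linarith [Real.pi_pos]) (show ε < π/2 - ε by linarith)
    rwa [Real.cos_pi_div_two_sub] at this
  have hpyth : Real.sin ε ^ 2 + Real.cos ε ^ 2 = 1 := Real.sin_sq_add_cos_sq ε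
  set s := Real.sin ε
  set c := Real.cos ε
  have h1 : Real.cos (π / 2 + ε) = -s := by
    rw [Real.cos_add, Real.cos_pi_div_two, Real.sin_pi_div_two]; ring
  have h2 : Real.cos (π / 2 + 2 * ε) = -(2 * s * c) := by
    rw [Real.cos_add, Real.cos_pi_div_two, Real.sin_pi_div_two, Real.sin_two_mul]; ring
  have h3 : Real.sin (π / 2 + 2 * ε) = c ^ 2 - s ^ 2 := by
    rw [Real.sin_add, Real.cos_pi_div_two, Real.sin_pi_div_two, Real.cos_two_mul']; ring
  have h4 : Real.sin (2 * ε) = 2 * s * c := Real.sin_two_mul ε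
  have hd1 : c ^ 2 - s ^ 2 > 0 := by nlinarith
  have hd2 : 1 - 2 * s * c > 0 := by nlinarith
  have hd3 : 1 - 2 * s * c ≠ 0 := ne_of_gt hd2
  constructor
  · rw [h1, h2, h3, h4]
    have hD1 : (0:ℝ) < (c ^ 2 - s ^ 2) * s := mul_pos hd1 hs
    have hD2 : (0:ℝ) < (1 + -(2 * s * c)) * (c ^ 2 - s ^ 2) * s :=
      mul_pos (mul_pos (by linarith) hd1) hs
    rw [div_sub_div _ _ hD1.ne' hD2.ne', div_eq_div_iff (mul_pos hD1 hD2).ne' hd3]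
    linear_combination (s ^ 2 * (c ^ 2 - s ^ 2) * (1 - 2 * s * c) * (1 + 2 * s * c)) * hpyth
  · rw [h4, one_lt_div hd2]
    nlinarith [mul_pos hs hc]
end

section
/- Let κ > 0 and let ABC be a triangle in the sphere of curvature κ² with side lengths x = AB, y = AC, z = BC, all positive, and angles α = ∠BAC, β = ∠ABC. Then sin(κz) = [(cos(κy)+cos(κz))/(1+cos(κx))]·sin(κx)·cos β − sin(κy)·cos(α+β). -/
open Real

/-- Spherical identity: for a non-degenerate spherical triangle with sides
`x = AB`, `y = AC`, `z = BC` and angles `α = ∠BAC`, `β = ∠ABC` (encoded by the spherical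
laws of cosines at `A` and `B` and the spherical law of sines),
`sin(κz) = [(cos(κy)+cos(κz))/(1+cos(κx))]·sin(κx)·cos β − sin(κy)·cos(α+β)`. -/
theorem spherical_growth_identity (κ x y z α β : ℝ) (hκ : 0 < κ)
    (hx : 0 < x) (hy : 0 < y) (hz : 0 < z)
    (hxπ : x < π / κ) (hyπ : y < π / κ) (hzπ : z < π / κ)
    (hα : α ∈ Set.Ioo (0 : ℝ) π) (hβ : β ∈ Set.Ioo (0 : ℝ) π)
    (hcosA : Real.cos (κ * z)
      = Real.cos (κ * x) * Real.cos (κ * y)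
        + Real.sin (κ * x) * Real.sin (κ * y) * Real.cos α)
    (hcosB : Real.cos (κ * y)
      = Real.cos (κ * x) * Real.cos (κ * z)
        + Real.sin (κ * x) * Real.sin (κ * z) * Real.cos β)
    (hsine : Real.sin (κ * z) * Real.sin β = Real.sin (κ * y) * Real.sin α) :
    Real.sin (κ * z)
      = (Real.cos (κ * y) + Real.cos (κ * z)) / (1 + Real.cos (κ * x))
          * Real.sin (κ * x) * Real.cos β
        - Real.sin (κ * y) * Real.cos (α + β) := by
  have hax1 : 0 < κ * x := mul_pos hκ hx
  have hax2 : κ * x < π := by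
    rw [mul_comm]; exact (lt_div_iff₀ hκ).mp hxπ
  have hsa : 0 < Real.sin (κ * x) := Real.sin_pos_of_pos_of_lt_pi hax1 hax2
  have hca : 0 < 1 + Real.cos (κ * x) := by
    nlinarith [Real.sin_sq_add_cos_sq (κ * x), hsa]
  have key : Real.sin (κ * z) * (1 + Real.cos (κ * x)) * Real.sin (κ * x)
      = ((Real.cos (κ * y) + Real.cos (κ * z)) * Real.sin (κ * x) * Real.cos β
          - Real.sin (κ * y) * Real.cos (α + β) * (1 + Real.cos (κ * x))) * Real.sin (κ * x) := by
    rw [Real.cos_add]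
    linear_combination (-(Real.cos β * (1 + Real.cos (κ * x)))) * hcosA
      + (-(Real.cos β * (1 + Real.cos (κ * x)))) * hcosB
      + (Real.sin β * Real.sin (κ * x) * (1 + Real.cos (κ * x))) * hsine
      + (-( (Real.cos (κ * y) + Real.cos (κ * z)) * Real.cos β)) * Real.sin_sq_add_cos_sq (κ * x)
      + (-(Real.sin (κ * z) * Real.sin (κ * x) * (1 + Real.cos (κ * x)))) * Real.sin_sq_add_cos_sq β
  have key2 : Real.sin (κ * z) * (1 + Real.cos (κ * x))
      = (Real.cos (κ * y) + Real.cos (κ * z)) * Real.sin (κ * x) * Real.cos β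
          - Real.sin (κ * y) * Real.cos (α + β) * (1 + Real.cos (κ * x)) :=
    mul_right_cancel₀ (ne_of_gt hsa) key
  field_simp
  linear_combination key2
end

section
/- Let κ > 0 and let ABCD be a convex quadrilateral in the sphere of curvature κ² whose diagonals AC and BD intersect at a point O. Write x = BO, y = DO, z = AO, w = OC, and α = ∠BOC, and set a = AB, b = BC, c = CD, d = AD, e = BD = x+y, f = AC = z+w, and let g be the spherical distance between the midpoints of BD and AC (so cos(κg) = cos(κ(w−z)/2)cos(κ(x−y)/2) + sin(κ(w−z)/2)sin(κ(x−y)/2)cos α). Then cos(κa) + cos(κb) + cos(κc) + cos(κd) = 4·cos(κe/2)·cos(κf/2)·cos(κg). -/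
open Real

/-- Spherical K-Euler equality: for a convex spherical quadrilateral `ABCD` whose
diagonals meet at `O`, with `x = BO`, `y = DO`, `z = AO`, `w = OC`, `α = ∠BOC`, sides
`a, b, c, d`, diagonals `e = x + y`, `f = z + w`, and `g` the distance between the
midpoints of the diagonals (encoded via the spherical law of cosines),
`cos(κa) + cos(κb) + cos(κc) + cos(κd) = 4·cos(κe/2)·cos(κf/2)·cos(κg)`. -/
theorem spherical_K_euler_equality (κ x y z w α a b c d e f g : ℝ) (hκ : 0 < κ)
    (he : e = x + y) (hf : f = z + w)
    (hcosa : Real.cos (κ * a)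
      = Real.cos (κ * x) * Real.cos (κ * z) - Real.sin (κ * x) * Real.sin (κ * z) * Real.cos α)
    (hcosb : Real.cos (κ * b)
      = Real.cos (κ * x) * Real.cos (κ * w) + Real.sin (κ * x) * Real.sin (κ * w) * Real.cos α)
    (hcosc : Real.cos (κ * c)
      = Real.cos (κ * y) * Real.cos (κ * w) - Real.sin (κ * y) * Real.sin (κ * w) * Real.cos α)
    (hcosd : Real.cos (κ * d)
      = Real.cos (κ * y) * Real.cos (κ * z) + Real.sin (κ * y) * Real.sin (κ * z) * Real.cos α)
    (hcosg : Real.cos (κ * g)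
      = Real.cos (κ * (w - z) / 2) * Real.cos (κ * (x - y) / 2)
        + Real.sin (κ * (w - z) / 2) * Real.sin (κ * (x - y) / 2) * Real.cos α) :
    Real.cos (κ * a) + Real.cos (κ * b) + Real.cos (κ * c) + Real.cos (κ * d)
      = 4 * Real.cos (κ * e / 2) * Real.cos (κ * f / 2) * Real.cos (κ * g) := by
  subst he hf
  have Hc1 : Real.cos (κ * x) + Real.cos (κ * y)
      = 2 * Real.cos (κ * (x + y) / 2) * Real.cos (κ * (x - y) / 2) := by
    rw [Real.cos_add_cos]; ring_nf
  have Hc2 : Real.cos (κ * z) + Real.cos (κ * w)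
      = 2 * Real.cos (κ * (z + w) / 2) * Real.cos (κ * (w - z) / 2) := by
    rw [add_comm, Real.cos_add_cos]; ring_nf
  have Hs1 : Real.sin (κ * x) - Real.sin (κ * y)
      = 2 * Real.sin (κ * (x - y) / 2) * Real.cos (κ * (x + y) / 2) := by
    rw [Real.sin_sub_sin]; ring_nf
  have Hs2 : Real.sin (κ * w) - Real.sin (κ * z)
      = 2 * Real.sin (κ * (w - z) / 2) * Real.cos (κ * (z + w) / 2) := by
    rw [Real.sin_sub_sin]; ring_nf
  rw [hcosa, hcosb, hcosc, hcosd]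
  linear_combination (Real.cos (κ * z) + Real.cos (κ * w)) * Hc1
    + (2 * Real.cos (κ * (x + y) / 2) * Real.cos (κ * (x - y) / 2)) * Hc2
    + Real.cos α * (Real.sin (κ * w) - Real.sin (κ * z)) * Hs1
    + Real.cos α * (2 * Real.sin (κ * (x - y) / 2) * Real.cos (κ * (x + y) / 2)) * Hs2
    - 4 * Real.cos (κ * (x + y) / 2) * Real.cos (κ * (z + w) / 2) * hcosg
end

section
/- Let κ > 0 and let x, y, z, w, α be real numbers, and define a, b, c, d by cos(κa) = cos(κx)cos(κz) − sin(κx)sin(κz)cos α, cos(κb) = cos(κx)cos(κw) + sin(κx)sin(κw)cos α, cos(κc) = cos(κy)cos(κw) − sin(κy)sin(κw)cos α, cos(κd) = cos(κy)cos(κz) + sin(κy)sin(κz)cos α. Then cos(κa)+cos(κb)+cos(κc)+cos(κd) = 4·cos(κ(x+y)/2)·cos(κ(z+w)/2)·[cos(κ(w−z)/2)·cos(κ(x−y)/2) + sin(κ(w−z)/2)·sin(κ(x−y)/2)·cos α]. -/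
open Real

/-- Purely trigonometric form of the spherical K-Euler equality. -/
theorem spherical_K_euler_identity (κ x y z w α a b c d : ℝ) (hκ : 0 < κ)
    (hcosa : Real.cos (κ * a)
      = Real.cos (κ * x) * Real.cos (κ * z) - Real.sin (κ * x) * Real.sin (κ * z) * Real.cos α)
    (hcosb : Real.cos (κ * b)
      = Real.cos (κ * x) * Real.cos (κ * w) + Real.sin (κ * x) * Real.sin (κ * w) * Real.cos α)
    (hcosc : Real.cos (κ * c)
      = Real.cos (κ * y) * Real.cos (κ * w) - Real.sin (κ * y) * Real.sin (κ * w) * Real.cos α)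
    (hcosd : Real.cos (κ * d)
      = Real.cos (κ * y) * Real.cos (κ * z) + Real.sin (κ * y) * Real.sin (κ * z) * Real.cos α) :
    Real.cos (κ * a) + Real.cos (κ * b) + Real.cos (κ * c) + Real.cos (κ * d)
      = 4 * Real.cos (κ * (x + y) / 2) * Real.cos (κ * (z + w) / 2)
          * (Real.cos (κ * (w - z) / 2) * Real.cos (κ * (x - y) / 2)
            + Real.sin (κ * (w - z) / 2) * Real.sin (κ * (x - y) / 2) * Real.cos α) := by
  rw [hcosa, hcosb, hcosc, hcosd]
  have h1 := Real.cos_add_cos (κ * x) (κ * y)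
  have h2 := Real.cos_add_cos (κ * w) (κ * z)
  have h3 := Real.sin_sub_sin (κ * x) (κ * y)
  have h4 := Real.sin_sub_sin (κ * w) (κ * z)
  have e1 : (κ * x + κ * y) / 2 = κ * (x + y) / 2 := by ring
  have e2 : (κ * x - κ * y) / 2 = κ * (x - y) / 2 := by ring
  have e3 : (κ * w + κ * z) / 2 = κ * (z + w) / 2 := by ring
  have e4 : (κ * w - κ * z) / 2 = κ * (w - z) / 2 := by ring
  rw [e1, e2] at h1 h3
  rw [e3, e4] at h2 h4
  linear_combination (Real.cos (κ * z) + Real.cos (κ * w)) * h1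
    + (2 * Real.cos (κ * (x + y) / 2) * Real.cos (κ * (x - y) / 2)) * h2
    + (Real.sin (κ * w) - Real.sin (κ * z)) * Real.cos α * h3
    + (2 * Real.sin (κ * (x - y) / 2) * Real.cos (κ * (x + y) / 2)) * Real.cos α * h4
end

section
/- Let κ > 0 and let x, y, z, w, α be real numbers, and define A, B, C, D by A = cosh(κx)cosh(κz) − sinh(κx)sinh(κz)cos α, B = cosh(κx)cosh(κw) + sinh(κx)sinh(κw)cos α, C = cosh(κy)cosh(κw) − sinh(κy)sinh(κw)cos α, D = cosh(κy)cosh(κz) + sinh(κy)sinh(κz)cos α. Then A + B + C + D = 4·cosh(κ(x+y)/2)·cosh(κ(z+w)/2)·[cosh(κ(w−z)/2)·cosh(κ(x−y)/2) + sinh(κ(w−z)/2)·sinh(κ(x−y)/2)·cos α]. -/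
open Real

/-- Purely algebraic hyperbolic form of the K-Euler equality. -/
theorem hyperbolic_K_euler_identity (κ x y z w α A B C D : ℝ) (hκ : 0 < κ)
    (hA : A = Real.cosh (κ * x) * Real.cosh (κ * z)
      - Real.sinh (κ * x) * Real.sinh (κ * z) * Real.cos α)
    (hB : B = Real.cosh (κ * x) * Real.cosh (κ * w)
      + Real.sinh (κ * x) * Real.sinh (κ * w) * Real.cos α)
    (hC : C = Real.cosh (κ * y) * Real.cosh (κ * w)
      - Real.sinh (κ * y) * Real.sinh (κ * w) * Real.cos α)
    (hD : D = Real.cosh (κ * y) * Real.cosh (κ * z)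
      + Real.sinh (κ * y) * Real.sinh (κ * z) * Real.cos α) :
    A + B + C + D
      = 4 * Real.cosh (κ * (x + y) / 2) * Real.cosh (κ * (z + w) / 2)
          * (Real.cosh (κ * (w - z) / 2) * Real.cosh (κ * (x - y) / 2)
            + Real.sinh (κ * (w - z) / 2) * Real.sinh (κ * (x - y) / 2) * Real.cos α) := by
  subst hA hB hC hD
  have hx : κ * x = κ * (x + y) / 2 + κ * (x - y) / 2 := by ring
  have hy : κ * y = κ * (x + y) / 2 - κ * (x - y) / 2 := by ring
  have hz : κ * z = κ * (z + w) / 2 - κ * (w - z) / 2 := by ring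
  have hw : κ * w = κ * (z + w) / 2 + κ * (w - z) / 2 := by ring
  rw [hx, hy, hz, hw]
  simp only [Real.cosh_add, Real.sinh_add, Real.cosh_sub, Real.sinh_sub]
  have c1 := Real.cosh_sq_sub_sinh_sq (κ * (x - y) / 2)
  have c2 := Real.cosh_sq_sub_sinh_sq (κ * (w - z) / 2)
  nlinarith [c1, c2, sq_nonneg (Real.cosh (κ * (x + y) / 2)), sq_nonneg (Real.cosh (κ * (z + w) / 2))]
end

section
/- Let κ > 0 and let ABCD be a convex quadrilateral in the sphere of curvature κ² whose diagonals intersect, with a = AB, b = BC, c = CD, d = DA, e = BD, f = AC, and suppose e/2, f/2, and the distance g between the midpoints of the diagonals lie in [0, π/(2κ)]. Then cos(κa) + cos(κb) + cos(κc) + cos(κd) ≤ 4·cos(κe/2)·cos(κf/2). -/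
open Real

private lemma aux_keuler (p q r s t : ℝ) :
    (Real.cos (p + q) * Real.cos (r - s) - Real.sin (p + q) * Real.sin (r - s) * t)
      + (Real.cos (p + q) * Real.cos (r + s) + Real.sin (p + q) * Real.sin (r + s) * t)
      + (Real.cos (p - q) * Real.cos (r + s) - Real.sin (p - q) * Real.sin (r + s) * t)
      + (Real.cos (p - q) * Real.cos (r - s) + Real.sin (p - q) * Real.sin (r - s) * t)
    = 4 * Real.cos p * Real.cos r * (Real.cos s * Real.cos q + Real.sin s * Real.sin q * t) := by
  simp only [Real.cos_add, Real.cos_sub, Real.sin_add, Real.sin_sub]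
  ring

/-- Spherical K-Euler inequality: for a convex spherical quadrilateral (encoded via the
spherical law of cosines with diagonals meeting at `O`), if `e/2`, `f/2` and the
midpoint distance `g` all lie in `[0, π/(2κ)]`, then
`cos(κa) + cos(κb) + cos(κc) + cos(κd) ≤ 4·cos(κe/2)·cos(κf/2)`. -/
theorem spherical_K_euler_inequality (κ x y z w α a b c d e f g : ℝ) (hκ : 0 < κ)
    (he : e = x + y) (hf : f = z + w)
    (hcosa : Real.cos (κ * a)
      = Real.cos (κ * x) * Real.cos (κ * z) - Real.sin (κ * x) * Real.sin (κ * z) * Real.cos α)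
    (hcosb : Real.cos (κ * b)
      = Real.cos (κ * x) * Real.cos (κ * w) + Real.sin (κ * x) * Real.sin (κ * w) * Real.cos α)
    (hcosc : Real.cos (κ * c)
      = Real.cos (κ * y) * Real.cos (κ * w) - Real.sin (κ * y) * Real.sin (κ * w) * Real.cos α)
    (hcosd : Real.cos (κ * d)
      = Real.cos (κ * y) * Real.cos (κ * z) + Real.sin (κ * y) * Real.sin (κ * z) * Real.cos α)
    (hcosg : Real.cos (κ * g)
      = Real.cos (κ * (w - z) / 2) * Real.cos (κ * (x - y) / 2)
        + Real.sin (κ * (w - z) / 2) * Real.sin (κ * (x - y) / 2) * Real.cos α)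
    (he2 : e / 2 ∈ Set.Icc (0 : ℝ) (π / (2 * κ)))
    (hf2 : f / 2 ∈ Set.Icc (0 : ℝ) (π / (2 * κ)))
    (hg : g ∈ Set.Icc (0 : ℝ) (π / (2 * κ))) :
    Real.cos (κ * a) + Real.cos (κ * b) + Real.cos (κ * c) + Real.cos (κ * d)
      ≤ 4 * Real.cos (κ * e / 2) * Real.cos (κ * f / 2) := by
  have key : Real.cos (κ * a) + Real.cos (κ * b) + Real.cos (κ * c) + Real.cos (κ * d)
      = 4 * Real.cos (κ * e / 2) * Real.cos (κ * f / 2) * Real.cos (κ * g) := by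
    rw [hcosa, hcosb, hcosc, hcosd, hcosg]
    rw [he, hf]
    have e1 : κ * x = κ * (x + y) / 2 + κ * (x - y) / 2 := by ring
    have e2 : κ * y = κ * (x + y) / 2 - κ * (x - y) / 2 := by ring
    have e3 : κ * z = κ * (z + w) / 2 - κ * (w - z) / 2 := by ring
    have e4 : κ * w = κ * (z + w) / 2 + κ * (w - z) / 2 := by ring
    have e5 : κ * (x + y) / 2 = κ * (x + y) / 2 := rfl
    simp only [e1, e2, e3, e4]
    have := aux_keuler (κ * (x + y) / 2) (κ * (x - y) / 2) (κ * (z + w) / 2)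
      (κ * (w - z) / 2) (Real.cos α)
    linarith [this]
  rw [key]
  have hκ' : κ ≠ 0 := ne_of_gt hκ
  have hce : 0 ≤ Real.cos (κ * e / 2) := by
    apply Real.cos_nonneg_of_mem_Icc
    constructor
    · nlinarith [he2.1, Real.pi_pos]
    · have := he2.2
      rw [div_le_div_iff₀ (by norm_num) (by positivity)] at this
      nlinarith
  have hcf : 0 ≤ Real.cos (κ * f / 2) := by
    apply Real.cos_nonneg_of_mem_Icc
    constructor
    · nlinarith [hf2.1, Real.pi_pos]
    · have := hf2.2
      rw [div_le_div_iff₀ (by norm_num) (by positivity)] at this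
      nlinarith
  have hcg : Real.cos (κ * g) ≤ 1 := Real.cos_le_one _
  nlinarith [mul_nonneg hce hcf]
end

section
/- Let κ > 0 and let ABCD be a convex quadrilateral in the hyperbolic plane of curvature −κ² whose diagonals intersect, with a = AB, b = BC, c = CD, d = DA, e = BD, f = AC. Then cosh(κa) + cosh(κb) + cosh(κc) + cosh(κd) ≥ 4·cosh(κe/2)·cosh(κf/2). -/
open Real

/-- Hyperbolic K-Euler inequality: for a convex quadrilateral in the hyperbolic plane of
curvature `−κ²` (encoded via the hyperbolic law of cosines with diagonals meeting at `O`),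
`cosh(κa) + cosh(κb) + cosh(κc) + cosh(κd) ≥ 4·cosh(κe/2)·cosh(κf/2)`. -/
theorem hyperbolic_K_euler_inequality (κ x y z w α a b c d e f g : ℝ) (hκ : 0 < κ)
    (he : e = x + y) (hf : f = z + w)
    (hcosha : Real.cosh (κ * a)
      = Real.cosh (κ * x) * Real.cosh (κ * z) - Real.sinh (κ * x) * Real.sinh (κ * z) * Real.cos α)
    (hcoshb : Real.cosh (κ * b)
      = Real.cosh (κ * x) * Real.cosh (κ * w) + Real.sinh (κ * x) * Real.sinh (κ * w) * Real.cos α)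
    (hcoshc : Real.cosh (κ * c)
      = Real.cosh (κ * y) * Real.cosh (κ * w) - Real.sinh (κ * y) * Real.sinh (κ * w) * Real.cos α)
    (hcoshd : Real.cosh (κ * d)
      = Real.cosh (κ * y) * Real.cosh (κ * z) + Real.sinh (κ * y) * Real.sinh (κ * z) * Real.cos α)
    (hcoshg : Real.cosh (κ * g)
      = Real.cosh (κ * (w - z) / 2) * Real.cosh (κ * (x - y) / 2)
        + Real.sinh (κ * (w - z) / 2) * Real.sinh (κ * (x - y) / 2) * Real.cos α) :
    Real.cosh (κ * a) + Real.cosh (κ * b) + Real.cosh (κ * c) + Real.cosh (κ * d)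
      ≥ 4 * Real.cosh (κ * e / 2) * Real.cosh (κ * f / 2) := by
  have hX : κ * x = κ * (x + y) / 2 + κ * (x - y) / 2 := by ring
  have hY : κ * y = κ * (x + y) / 2 - κ * (x - y) / 2 := by ring
  have hW : κ * w = κ * (z + w) / 2 + κ * (w - z) / 2 := by ring
  have hZ : κ * z = κ * (z + w) / 2 - κ * (w - z) / 2 := by ring
  have key : Real.cosh (κ * a) + Real.cosh (κ * b) + Real.cosh (κ * c) + Real.cosh (κ * d)
      = 4 * Real.cosh (κ * e / 2) * Real.cosh (κ * f / 2) * Real.cosh (κ * g) := by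
    rw [hcosha, hcoshb, hcoshc, hcoshd, hcoshg, he, hf, hX, hY, hW, hZ]
    simp only [Real.cosh_add, Real.cosh_sub, Real.sinh_add, Real.sinh_sub]
    ring
  nlinarith [Real.one_le_cosh (κ * g), Real.cosh_pos (κ * e / 2), Real.cosh_pos (κ * f / 2),
    mul_pos (Real.cosh_pos (κ * e / 2)) (Real.cosh_pos (κ * f / 2))]
end

section
/- Let κ > 0 and let a, b, c > 0 with a + b + c < 2π/κ and a, b, c ≤ π/κ. If [cos(κc) − cos(κa)cos(κb)] / [sin(κa)·sin(κb)] ≤ 1 and sin(κa)sin(κb) > 0, then b ≤ a + c. -/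
open Real

/-- Triangle inequality from the upper four point `cosq_K` condition, `K = κ² > 0`. -/
theorem triangle_ineq_from_upper_cosq (κ a b c : ℝ) (hκ : 0 < κ)
    (ha : 0 < a) (hb : 0 < b) (hc : 0 < c)
    (hper : a + b + c < 2 * π / κ)
    (haπ : a ≤ π / κ) (hbπ : b ≤ π / κ) (hcπ : c ≤ π / κ)
    (hba : |b - a| ≤ π / κ)
    (hcosq : (Real.cos (κ * c) - Real.cos (κ * a) * Real.cos (κ * b))
        / (Real.sin (κ * a) * Real.sin (κ * b)) ≤ 1)
    (hsin : 0 < Real.sin (κ * a) * Real.sin (κ * b)) :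
    b ≤ a + c := by
  have h1 : Real.cos (κ * c) - Real.cos (κ * a) * Real.cos (κ * b)
      ≤ Real.sin (κ * a) * Real.sin (κ * b) := by
    have := (div_le_one hsin).mp hcosq
    linarith
  have h2 : Real.cos (κ * c) ≤ Real.cos (κ * (b - a)) := by
    have : Real.cos (κ * (b - a)) = Real.cos (κ * b - κ * a) := by ring_nf
    rw [this, Real.cos_sub]
    linarith
  have h3 : Real.cos (κ * c) ≤ Real.cos (κ * |b - a|) := by
    rcases abs_cases (b - a) with ⟨h, _⟩ | ⟨h, _⟩
    · rwa [h]
    · rw [h, mul_neg, Real.cos_neg]; exact h2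
  have hmem1 : κ * |b - a| ∈ Set.Icc 0 π := by
    constructor
    · positivity
    · calc κ * |b - a| ≤ κ * (π / κ) := by
            exact mul_le_mul_of_nonneg_left hba hκ.le
        _ = π := by field_simp
  have hmem2 : κ * c ∈ Set.Icc 0 π := by
    constructor
    · positivity
    · calc κ * c ≤ κ * (π / κ) := by
            exact mul_le_mul_of_nonneg_left hcπ hκ.le
        _ = π := by field_simp
  have h4 : κ * |b - a| ≤ κ * c := by
    by_contra h
    push_neg at h
    exact absurd (Real.strictAntiOn_cos hmem2 hmem1 h) (not_lt.mpr h3)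
  have h5 : |b - a| ≤ c := le_of_mul_le_mul_left h4 hκ
  have := abs_le.mp h5
  linarith [this.2]
end

section
/- Let κ > 0 and suppose real numbers y, f, x satisfy |f − y| ≤ x with 0 < y, f, y + x < π/(2κ) and x > 0. If sin(κy) − κx·cos(κy)·c ≤ sin(κf) + E for some real c ∈ [−1,1] and E ∈ ℝ, then cos(κf) ≤ cos(κy) + κx·sin(κy)·c + E' where E' can be taken of the form C·(x² + |E|) for a constant C depending only on upper and lower bounds for y and on κ. -/
open Real

/-- Converting the sine-form cross-diagonal estimate into the cosine-form estimate:
there is a constant `C > 0` (depending only on `κ` and bounds `y_min ≤ y ≤ y_max`)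
and a threshold `x₀ > 0` such that for all admissible data the implication holds. -/
theorem sine_to_cosine_estimate (κ ymin ymax : ℝ) (hκ : 0 < κ)
    (hymin : 0 < ymin) (hymax : ymax < π / (2 * κ)) (hmm : ymin ≤ ymax) :
    ∃ C > (0 : ℝ), ∃ x₀ > (0 : ℝ),
      ∀ y f x c E : ℝ,
        ymin ≤ y → y ≤ ymax →
        |f - y| ≤ x → 0 < x → x ≤ x₀ → 0 < f → y + x < π / (2 * κ) →
        c ∈ Set.Icc (-1 : ℝ) 1 → 0 ≤ E →
        Real.sin (κ * y) - κ * x * Real.cos (κ * y) * c ≤ Real.sin (κ * f) + E →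
        Real.cos (κ * f) ≤ Real.cos (κ * y) + κ * x * Real.sin (κ * y) * c + C * (x ^ 2 + |E|) := by
  have h2κ : (0:ℝ) < 2 * κ := by positivity
  have hymax0 : 0 < ymax := lt_of_lt_of_le hymin hmm
  have hkmax : κ * ymax < π / 2 := by
    rw [lt_div_iff₀ h2κ] at hymax
    nlinarith
  have hkmax0 : 0 < κ * ymax := mul_pos hκ hymax0
  have hcmax : 0 < Real.cos (κ * ymax) :=
    Real.cos_pos_of_mem_Ioo ⟨by nlinarith [Real.pi_pos], hkmax⟩
  refine ⟨1 / Real.cos (κ * ymax), by positivity, 1, one_pos, ?_⟩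
  intro y f x c E hy1 hy2 hfy hx hx1 hf hyx hc hE hyp
  have hy0 : 0 < y := lt_of_lt_of_le hymin hy1
  have hky0 : 0 < κ * y := mul_pos hκ hy0
  have hky : κ * y < π / 2 := by nlinarith
  have hcy : 0 < Real.cos (κ * y) :=
    Real.cos_pos_of_mem_Ioo ⟨by nlinarith [Real.pi_pos], hky⟩
  have hsy0 : 0 ≤ Real.sin (κ * y) :=
    Real.sin_nonneg_of_nonneg_of_le_pi (le_of_lt hky0) (by nlinarith [Real.pi_pos])
  have hsy1 : Real.sin (κ * y) ≤ 1 := Real.sin_le_one _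
  have hcyle : Real.cos (κ * ymax) ≤ Real.cos (κ * y) := by
    apply Real.cos_le_cos_of_nonneg_of_le_pi (le_of_lt hky0) (by nlinarith [Real.pi_pos])
    nlinarith
  have hkf : κ * f = κ * y + κ * (f - y) := by ring
  have hsf : Real.sin (κ * f)
      = Real.sin (κ * y) * Real.cos (κ * (f - y))
        + Real.cos (κ * y) * Real.sin (κ * (f - y)) := by
    rw [hkf, Real.sin_add]
  have hcf : Real.cos (κ * f)
      = Real.cos (κ * y) * Real.cos (κ * (f - y))
        - Real.sin (κ * y) * Real.sin (κ * (f - y)) := by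
    rw [hkf, Real.cos_add]
  have hch : Real.cos (κ * (f - y)) ≤ 1 := Real.cos_le_one _
  rw [hsf] at hyp
  rw [hcf, abs_of_nonneg hE]
  set sy := Real.sin (κ * y)
  set cy := Real.cos (κ * y)
  set sh := Real.sin (κ * (f - y))
  set ch := Real.cos (κ * (f - y))
  set cmax := Real.cos (κ * ymax)
  -- key positivity fact from the hypothesis
  have h1 : 0 ≤ cy * sh + κ * x * cy * c + E := by
    nlinarith [mul_nonneg hsy0 (sub_nonneg.mpr hch)]
  -- multiply by sy and divide by cy
  have h2 : -(sy * sh) ≤ κ * x * sy * c + E * sy / cy := by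
    have key : (-(sy * sh)) * cy ≤ (κ * x * sy * c + E * sy / cy) * cy := by
      have hexp : (κ * x * sy * c + E * sy / cy) * cy = κ * x * sy * c * cy + E * sy := by
        field_simp
      rw [hexp]
      linarith [mul_nonneg hsy0 h1]
    exact le_of_mul_le_mul_right key hcy
  have hdiv : E * sy / cy ≤ E / cmax :=
    div_le_div₀ hE (mul_le_of_le_one_right hE hsy1) hcmax hcyle
  have hcyc : cy * ch ≤ cy := mul_le_of_le_one_right (le_of_lt hcy) hch
  have heq : 1 / cmax * (x ^ 2 + E) = x ^ 2 / cmax + E / cmax := by ring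
  have hx2 : 0 ≤ x ^ 2 / cmax := by positivity
  linarith
end
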